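/- arXiv:2309.14632 — 2 statements merged into one kernel-verified Lean document; each statement's English description precedes it below -/
import Mathlib

section
/- If X is a Hausdorff space, then d(X) ≤ πχ(X)^(c(X)·nq(X)). -/
open Cardinal Set TopologicalSpace

universe u

/-- The density of a space: the least cardinality of a dense subset. -/
noncomputable def dens (X : Type u) [TopologicalSpace X] : Cardinal.{u} :=
  sInf {c : Cardinal.{u} | ∃ D : Set X, Dense D ∧ #D = c}

/-- A local π-base at a point: a family of nonempty open sets such that every
open set containing the point contains a member of the family. -/
def IsLocalPiBase (X : Type u) [TopologicalSpace X] (x : X) (𝒱 : Set (Set X)) : Prop :=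
  (∀ V ∈ 𝒱, IsOpen V ∧ V.Nonempty) ∧
    ∀ U : Set X, IsOpen U → x ∈ U → ∃ V ∈ 𝒱, V ⊆ U

/-- The π-character at a point: the least infinite cardinality of a local π-base. -/
noncomputable def piCharPoint (X : Type u) [TopologicalSpace X] (x : X) : Cardinal.{u} :=
  sInf {κ : Cardinal.{u} | ℵ₀ ≤ κ ∧ ∃ 𝒱 : Set (Set X), IsLocalPiBase X x 𝒱 ∧ #𝒱 ≤ κ}

/-- The π-character of a space. -/
noncomputable def piChar (X : Type u) [TopologicalSpace X] : Cardinal.{u} :=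
  ⨆ x : X, piCharPoint X x

/-- A π-base for a space. -/
def IsPiBase (X : Type u) [TopologicalSpace X] (𝒱 : Set (Set X)) : Prop :=
  (∀ V ∈ 𝒱, IsOpen V ∧ V.Nonempty) ∧
    ∀ U : Set X, IsOpen U → U.Nonempty → ∃ V ∈ 𝒱, V ⊆ U

/-- The π-weight of a space: the least infinite cardinality of a π-base. -/
noncomputable def piWeight (X : Type u) [TopologicalSpace X] : Cardinal.{u} :=
  sInf {κ : Cardinal.{u} | ℵ₀ ≤ κ ∧ ∃ 𝒱 : Set (Set X), IsPiBase X 𝒱 ∧ #𝒱 ≤ κ}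

/-- The cellularity of a space: the least infinite cardinal bounding the size of
every pairwise disjoint family of nonempty open sets. -/
noncomputable def cellularity (X : Type u) [TopologicalSpace X] : Cardinal.{u} :=
  sInf {κ : Cardinal.{u} | ℵ₀ ≤ κ ∧ ∀ 𝒞 : Set (Set X),
    (∀ U ∈ 𝒞, IsOpen U ∧ U.Nonempty) → 𝒞.PairwiseDisjoint id → #𝒞 ≤ κ}

/-- The set of infinite cardinals κ witnessing the nonquasiregularity degree:
every nonempty open set U contains a nonempty set ⋂₀ 𝒱 with 𝒱 an open family of
size at most κ and ⋂_{V ∈ 𝒱} cl V ⊆ U. -/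
def nqSet (X : Type u) [TopologicalSpace X] : Set Cardinal.{u} :=
  {κ : Cardinal.{u} | ℵ₀ ≤ κ ∧ ∀ U : Set X, IsOpen U → U.Nonempty →
    ∃ 𝒱 : Set (Set X), (∀ V ∈ 𝒱, IsOpen V) ∧ #𝒱 ≤ κ ∧
      (⋂₀ 𝒱).Nonempty ∧ (⋂ V ∈ 𝒱, closure V) ⊆ U}

/-- A space is an nq-space if its nonquasiregularity degree is defined. -/
def IsNqSpace (X : Type u) [TopologicalSpace X] : Prop :=
  (nqSet X).Nonempty

/-- The nonquasiregularity degree of a space. -/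
noncomputable def nq (X : Type u) [TopologicalSpace X] : Cardinal.{u} :=
  sInf (nqSet X)

/-- The closed pseudocharacter at a point. -/
noncomputable def psiCPoint (X : Type u) [TopologicalSpace X] (x : X) : Cardinal.{u} :=
  sInf {κ : Cardinal.{u} | ℵ₀ ≤ κ ∧ ∃ 𝒱 : Set (Set X),
    (∀ V ∈ 𝒱, IsOpen V ∧ x ∈ V) ∧ #𝒱 ≤ κ ∧ (⋂ V ∈ 𝒱, closure V) = {x}}

/-- The closed pseudocharacter of a space. -/
noncomputable def psiC (X : Type u) [TopologicalSpace X] : Cardinal.{u} :=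
  sInf {κ : Cardinal.{u} | ℵ₀ ≤ κ ∧ ∀ x : X, ∃ 𝒱 : Set (Set X),
    (∀ V ∈ 𝒱, IsOpen V ∧ x ∈ V) ∧ #𝒱 ≤ κ ∧ (⋂ V ∈ 𝒱, closure V) = {x}}

/-- The dense closed pseudocharacter of a space. -/
noncomputable def dPsiC (X : Type u) [TopologicalSpace X] : Cardinal.{u} :=
  sInf {κ : Cardinal.{u} | ℵ₀ ≤ κ ∧ ∃ D : Set X, Dense D ∧ ∀ d ∈ D, psiCPoint X d ≤ κ}

/-- The weak closed pseudocharacter at a point: the least infinite cardinality of a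
family 𝒱 of open sets with ⋂_{V ∈ 𝒱} cl V = {x}. -/
noncomputable def wPsiCPoint (X : Type u) [TopologicalSpace X] (x : X) : Cardinal.{u} :=
  sInf {κ : Cardinal.{u} | ℵ₀ ≤ κ ∧ ∃ 𝒱 : Set (Set X),
    (∀ V ∈ 𝒱, IsOpen V) ∧ #𝒱 ≤ κ ∧ (⋂ V ∈ 𝒱, closure V) = {x}}

/-- The weak closed pseudocharacter of a space. -/
noncomputable def wPsiC (X : Type u) [TopologicalSpace X] : Cardinal.{u} :=
  ⨆ x : X, wPsiCPoint X x

/-- The pseudocharacter of a space: the least infinite cardinal κ such that every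
point is the intersection of at most κ open sets. -/
noncomputable def psi (X : Type u) [TopologicalSpace X] : Cardinal.{u} :=
  sInf {κ : Cardinal.{u} | ℵ₀ ≤ κ ∧ ∀ x : X, ∃ 𝒱 : Set (Set X),
    (∀ V ∈ 𝒱, IsOpen V) ∧ #𝒱 ≤ κ ∧ ⋂₀ 𝒱 = {x}}

/-- The Lindelöf degree of a space. -/
noncomputable def lindelofDegree (X : Type u) [TopologicalSpace X] : Cardinal.{u} :=
  sInf {κ : Cardinal.{u} | ℵ₀ ≤ κ ∧ ∀ 𝒰 : Set (Set X), (∀ U ∈ 𝒰, IsOpen U) →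
    ⋃₀ 𝒰 = Set.univ → ∃ 𝒱 ⊆ 𝒰, #𝒱 ≤ κ ∧ ⋃₀ 𝒱 = Set.univ}

/-- The cardinality of the collection of regular open subsets of a space. -/
noncomputable def cardRO (X : Type u) [TopologicalSpace X] : Cardinal.{u} :=
  #{R : Set X | R = interior (closure R)}

/-- A space is quasiregular if every nonempty open set contains a nonempty open
set whose closure is contained in it. -/
def Quasiregular (X : Type u) [TopologicalSpace X] : Prop :=
  ∀ U : Set X, IsOpen U → U.Nonempty →
    ∃ V : Set X, IsOpen V ∧ V.Nonempty ∧ closure V ⊆ U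

/-!
Let `κ = c(X) · nq(X)` and fix local π-bases of size `≤ πχ(X)` at every point. A closing-off
argument of length `κ⁺` yields a set `D` of size `≤ πχ(X)^κ` such that whenever at most `nq(X)`
pairwise disjoint families of π-base elements at points of `D` leave some point outside the
closures of all their unions, `D` contains such a point; cellularity bounds each family by
`c(X)`, which is what keeps the number of these configurations `≤ πχ(X)^κ`.

`D` is dense. If a nonempty open `U` missed `D`, take open sets `W` (at most `nq(X)` of them) with
`⋂ W` nonempty and `⋂ cl W ⊆ U`, and for each `W` a maximal disjoint family of π-base elements
at points of `D` missing `cl W`. Some `q ∈ D` lies outside the closures of all these families;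
as `q ∉ U`, it also lies outside some `cl W`, and a π-base element at `q` avoiding both closures
contradicts the maximality of the family chosen for `W`.
-/

section ClosingOff

variable {X : Type u} (Φ : Set X → Set X) (κ : Cardinal.{u})

def closingStep (A : Set X) : Set X :=
  A ∪ ⋃ S ∈ {S : Set X | S ⊆ A ∧ #S ≤ κ}, Φ S

theorem mk_closingStep_le {θ : Cardinal.{u}} (hθ : ℵ₀ ≤ θ) (hθκ : θ ^ κ ≤ θ)
    (hΦ : ∀ S : Set X, #S ≤ κ → #(Φ S) ≤ θ) {A : Set X} (hA : #A ≤ θ) :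
    #(closingStep Φ κ A) ≤ θ := by
  have hsmall : #{S : Set X | S ⊆ A ∧ #S ≤ κ} ≤ θ :=
    calc _ ≤ max #A ℵ₀ ^ κ := mk_bounded_subset_le A κ
      _ ≤ θ ^ κ := power_le_power_right (max_le hA hθ)
      _ ≤ θ := hθκ
  have hunion : #(⋃ S ∈ {S : Set X | S ⊆ A ∧ #S ≤ κ}, Φ S) ≤ θ :=
    calc _ ≤ _ := mk_biUnion_le _ _
      _ ≤ θ * θ := mul_le_mul' hsmall (ciSup_le' fun S => hΦ S S.2.2)
      _ = θ := mul_eq_self hθ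
  calc _ ≤ #A + _ := mk_union_le _ _
    _ ≤ θ + θ := add_le_add hA hunion
    _ = θ := add_eq_self hθ

def closingStages (ι : Type u) [LinearOrder ι] [WellFoundedLT ι] : ι → Set X :=
  wellFounded_lt.fix fun i stages => closingStep Φ κ (⋃ j : Iio i, stages j j.2)

theorem closingStages_eq (ι : Type u) [LinearOrder ι] [WellFoundedLT ι] (i : ι) :
    closingStages Φ κ ι i = closingStep Φ κ (⋃ j : Iio i, closingStages Φ κ ι j) :=
  wellFounded_lt.fix_eq _ _

theorem exists_forall_lt_of_mk_lt_cof {α : Type*} [LinearOrder α] {s : Set α}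
    (h : #s < Order.cof α) : ∃ b, ∀ x ∈ s, x < b := by
  by_contra! hs
  exact (Order.cof_le hs).not_gt h

variable {Φ κ} in
/-- The union of `κ⁺` stages of `closingStep` works: by regularity of `κ⁺`, a subset of size
`≤ κ` of the union already lies in a single stage. -/
theorem exists_closed_under_small_subsets {θ : Cardinal.{u}} (hκ : ℵ₀ ≤ κ) (hθ : ℵ₀ ≤ θ)
    (hθκ : θ ^ κ ≤ θ) (hΦ : ∀ S : Set X, #S ≤ κ → #(Φ S) ≤ θ) :
    ∃ D : Set X, #D ≤ θ ∧ ∀ S ⊆ D, #S ≤ κ → Φ S ⊆ D := by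
  let ι := (Order.succ κ).ord.ToType
  have hι : #ι = Order.succ κ := by rw [mk_toType, card_ord]
  have hcof : Order.cof ι = Order.succ κ := by
    rw [Ordinal.cof_toType, (isRegular_succ hκ).cof_ord]
  have hsuccθ : Order.succ κ ≤ θ := Order.succ_le_of_lt <|
    (cantor κ).trans_le <| (power_le_power_right (ofNat_le_aleph0.trans hθ)).trans hθκ
  have hιθ : #ι * θ ≤ θ := (mul_le_mul' (hι.trans_le hsuccθ) le_rfl).trans (mul_eq_self hθ).le
  set D := closingStages Φ κ ι
  have hD_eq : ∀ i, D i = closingStep Φ κ (⋃ j : Iio i, D j) := closingStages_eq Φ κ ι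
  have hD : ∀ i, #(D i) ≤ θ := by
    intro i
    induction i using WellFoundedLT.induction with
    | _ i ih =>
      rw [hD_eq]
      refine mk_closingStep_le Φ κ hθ hθκ hΦ ((mk_iUnion_le _).trans ?_)
      exact (mul_le_mul' (mk_set_le _) (ciSup_le' fun j : Iio i => ih j.1 j.2)).trans hιθ
  refine ⟨⋃ i, D i, (mk_iUnion_le _).trans ((mul_le_mul' le_rfl (ciSup_le' hD)).trans hιθ), ?_⟩
  intro S hS hSκ
  choose g hg using fun x : S => mem_iUnion.1 (hS x.2)
  obtain ⟨b, hb⟩ := exists_forall_lt_of_mk_lt_cof (s := range g) <| by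
    rw [hcof]
    exact mk_range_le.trans_lt (hSκ.trans_lt (Order.lt_succ κ))
  have hSb : S ⊆ ⋃ j : Iio b, D j := fun x hx =>
    mem_iUnion.2 ⟨⟨g ⟨x, hx⟩, hb _ (mem_range_self _)⟩, hg ⟨x, hx⟩⟩
  refine Subset.trans ?_ (subset_iUnion _ b)
  rw [hD_eq]
  have hS_small : S ∈ {S : Set X | S ⊆ ⋃ j : Iio b, D j ∧ #S ≤ κ} := ⟨hSb, hSκ⟩
  exact (subset_biUnion_of_mem (u := Φ) hS_small).trans subset_union_right

end ClosingOff

theorem exists_maximal_pairwiseDisjoint_subset {α : Type*} (E : Set (Set α)) :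
    ∃ 𝒞, Maximal (fun 𝒞 : Set (Set α) => 𝒞 ⊆ E ∧ 𝒞.PairwiseDisjoint id) 𝒞 :=
  zorn_subset _ fun c hc hchain =>
    ⟨⋃₀ c, ⟨sUnion_subset fun _ ht => (hc ht).1,
      (hchain.pairwiseDisjoint_sUnion id).2 fun _ ht => (hc ht).2⟩, fun _ => subset_sUnion_of_mem⟩

def disjointSubfamilies {X : Type u} (𝒜 : Set (Set X)) (ν : Cardinal.{u}) :
    Set (Set (Set (Set X))) :=
  {𝔉 | #𝔉 ≤ ν ∧ ∀ 𝒞 ∈ 𝔉, 𝒞 ⊆ 𝒜 ∧ 𝒞.PairwiseDisjoint id}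

theorem mk_le_max_aleph0_two_power {X : Type u} (𝒜 : Set (Set X)) : #𝒜 ≤ max ℵ₀ (2 ^ #X) :=
  (mk_set_le 𝒜).trans (mk_set.trans_le (le_max_right _ _))

section Topology

variable {X : Type u} [TopologicalSpace X]

def outsideClosures (𝔉 : Set (Set (Set X))) : Set X :=
  (⋃ 𝒞 ∈ 𝔉, closure (⋃₀ 𝒞))ᶜ

theorem dens_le_mk {D : Set X} (hD : Dense D) : dens X ≤ #D :=
  csInf_le' ⟨D, hD, rfl⟩

theorem cellularity_mem :
    cellularity X ∈ {κ : Cardinal.{u} | ℵ₀ ≤ κ ∧ ∀ 𝒞 : Set (Set X),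
      (∀ U ∈ 𝒞, IsOpen U ∧ U.Nonempty) → 𝒞.PairwiseDisjoint id → #𝒞 ≤ κ} :=
  csInf_mem ⟨_, le_max_left _ _, fun 𝒞 _ _ => mk_le_max_aleph0_two_power 𝒞⟩

theorem aleph0_le_cellularity : ℵ₀ ≤ cellularity X :=
  cellularity_mem.1

theorem mk_le_cellularity {𝒞 : Set (Set X)} (h𝒞 : ∀ U ∈ 𝒞, IsOpen U ∧ U.Nonempty)
    (hdisj : 𝒞.PairwiseDisjoint id) : #𝒞 ≤ cellularity X :=
  cellularity_mem.2 𝒞 h𝒞 hdisj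

theorem piCharPoint_mem (x : X) :
    piCharPoint X x ∈ {κ : Cardinal.{u} | ℵ₀ ≤ κ ∧
      ∃ 𝒱 : Set (Set X), IsLocalPiBase X x 𝒱 ∧ #𝒱 ≤ κ} :=
  csInf_mem ⟨_, le_max_left _ _, {V | IsOpen V ∧ V.Nonempty},
    ⟨fun _ hV => hV, fun U hU hxU => ⟨U, ⟨hU, x, hxU⟩, subset_rfl⟩⟩,
    mk_le_max_aleph0_two_power _⟩

theorem piCharPoint_le_piChar (x : X) : piCharPoint X x ≤ piChar X :=
  le_ciSup bddAbove_of_small x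

theorem aleph0_le_piChar [Nonempty X] : ℵ₀ ≤ piChar X :=
  (piCharPoint_mem (Classical.arbitrary X)).1.trans (piCharPoint_le_piChar _)

theorem exists_isLocalPiBase_mk_le_piChar (x : X) :
    ∃ 𝒱, IsLocalPiBase X x 𝒱 ∧ #𝒱 ≤ piChar X :=
  let ⟨_, 𝒱, h𝒱, hcard⟩ := piCharPoint_mem x
  ⟨𝒱, h𝒱, hcard.trans (piCharPoint_le_piChar x)⟩

theorem biInter_closure_open_nhds_subset [T2Space X] (x : X) :
    ⋂ V ∈ {V : Set X | IsOpen V ∧ x ∈ V}, closure V ⊆ {x} := by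
  intro y hy
  by_contra hyx
  obtain ⟨U, V, hU, hV, hyU, hxV, hUV⟩ := t2_separation hyx
  exact (hUV.closure_right hU).notMem_of_mem_left hyU (mem_iInter₂.1 hy V ⟨hV, hxV⟩)

theorem nq_mem_nqSet [T2Space X] : nq X ∈ nqSet X :=
  csInf_mem ⟨_, le_max_left _ _, fun _ _ ⟨x, hx⟩ =>
    ⟨{V | IsOpen V ∧ x ∈ V}, fun _ hV => hV.1, mk_le_max_aleph0_two_power _,
      ⟨x, fun _ hV => hV.2⟩,
      (biInter_closure_open_nhds_subset x).trans (singleton_subset_iff.2 hx)⟩⟩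

theorem dense_of_forall_inter_outsideClosures_nonempty {B : X → Set (Set X)}
    (hB : ∀ x, IsLocalPiBase X x (B x)) {ν : Cardinal.{u}} (hν : ν ∈ nqSet X) {D : Set X}
    (hD : ∀ 𝔉 ∈ disjointSubfamilies (⋃ x ∈ D, B x) ν,
      (outsideClosures 𝔉).Nonempty → (outsideClosures 𝔉 ∩ D).Nonempty) :
    Dense D := by
  rw [dense_iff_inter_open]
  intro U hU hUne
  by_contra hUD
  obtain ⟨𝒲, h𝒲open, h𝒲card, ⟨s, hs⟩, h𝒲U⟩ := hν.2 U hU hUne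
  set 𝒜 := ⋃ x ∈ D, B x
  choose 𝒞 h𝒞 using fun W : Set X =>
    exists_maximal_pairwiseDisjoint_subset {V ∈ 𝒜 | Disjoint V (closure W)}
  have hs_out : s ∈ outsideClosures (𝒞 '' 𝒲) := by
    simp only [outsideClosures, mem_compl_iff, mem_iUnion₂, not_exists, forall_mem_image]
    intro W hW hsW
    refine (mem_closure_iff.1 hsW W (h𝒲open W hW) (hs W hW)).elim fun z ⟨hzW, V, hV, hzV⟩ => ?_
    exact ((h𝒞 W).1.1 hV).2.notMem_of_mem_left hzV (subset_closure hzW)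
  obtain ⟨q, hq_out, hqD⟩ := hD (𝒞 '' 𝒲)
    ⟨mk_image_le.trans h𝒲card, forall_mem_image.2 fun W _ =>
      ⟨(h𝒞 W).1.1.trans fun _ hV => hV.1, (h𝒞 W).1.2⟩⟩ ⟨s, hs_out⟩
  obtain ⟨W, hW, hqW⟩ : ∃ W ∈ 𝒲, q ∉ closure W := by
    by_contra! h
    exact hUD ⟨q, h𝒲U (mem_iInter₂.2 h), hqD⟩
  have hq𝒞 : q ∉ closure (⋃₀ 𝒞 W) := fun h => hq_out (mem_biUnion (mem_image_of_mem 𝒞 hW) h)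
  obtain ⟨V, hVB, hVsub⟩ := (hB q).2 (closure W ∪ closure (⋃₀ 𝒞 W))ᶜ
    (isClosed_closure.union isClosed_closure).isOpen_compl (by simp [hqW, hq𝒞])
  have hV𝒜 : V ∈ {V ∈ 𝒜 | Disjoint V (closure W)} :=
    ⟨mem_biUnion hqD hVB, disjoint_left.2 fun _ hz hzW => hVsub hz (Or.inl hzW)⟩
  have hV_disj : ∀ V' ∈ 𝒞 W, Disjoint V V' := fun V' hV' =>
    disjoint_left.2 fun _ hz hz' => hVsub hz (Or.inr (subset_closure ⟨V', hV', hz'⟩))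
  have hV_notMem : V ∉ 𝒞 W := fun h =>
    ((hB q).1 V hVB).2.ne_empty (disjoint_self.1 (hV_disj V h))
  exact hV_notMem <| (h𝒞 W).2 ⟨insert_subset hV𝒜 (h𝒞 W).1.1,
    (h𝒞 W).1.2.insert fun V' hV' _ => hV_disj V' hV'⟩ (subset_insert V _) (mem_insert V _)

theorem mk_disjointSubfamilies_le {𝒜 : Set (Set X)} (h𝒜 : ∀ V ∈ 𝒜, IsOpen V ∧ V.Nonempty)
    {ν θ : Cardinal.{u}} (hθ : ℵ₀ ≤ θ) (h𝒜θ : #𝒜 ≤ θ) (hθc : θ ^ cellularity X ≤ θ)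
    (hθν : θ ^ ν ≤ θ) : #(disjointSubfamilies 𝒜 ν) ≤ θ := by
  let small := {𝒞 : Set (Set X) | 𝒞 ⊆ 𝒜 ∧ #𝒞 ≤ cellularity X}
  have hsmall : #small ≤ θ :=
    (mk_bounded_subset_le 𝒜 _).trans ((power_le_power_right (max_le h𝒜θ hθ)).trans hθc)
  have hsub : disjointSubfamilies 𝒜 ν ⊆ {𝔉 | 𝔉 ⊆ small ∧ #𝔉 ≤ ν} := fun 𝔉 ⟨hcard, h𝔉⟩ =>
    ⟨fun 𝒞 h𝒞 => ⟨(h𝔉 𝒞 h𝒞).1,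
      mk_le_cellularity (fun V hV => h𝒜 V ((h𝔉 𝒞 h𝒞).1 hV)) (h𝔉 𝒞 h𝒞).2⟩, hcard⟩
  exact (mk_le_mk_of_subset hsub).trans <|
    (mk_bounded_subset_le small ν).trans ((power_le_power_right (max_le hsmall hθ)).trans hθν)

theorem exists_subset_mem_disjointSubfamilies {B : X → Set (Set X)}
    {D : Set X} (hB : ∀ V ∈ ⋃ x ∈ D, B x, IsOpen V ∧ V.Nonempty) {ν : Cardinal.{u}}
    {𝔉 : Set (Set (Set X))} (h𝔉 : 𝔉 ∈ disjointSubfamilies (⋃ x ∈ D, B x) ν) :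
    ∃ S ⊆ D, #S ≤ cellularity X * ν ∧ 𝔉 ∈ disjointSubfamilies (⋃ x ∈ S, B x) ν := by
  have hpoint : ∀ V : ⋃₀ 𝔉, ∃ x ∈ D, V.1 ∈ B x := fun V => by
    obtain ⟨𝒞, h𝒞, hV⟩ := V.2
    simpa using (h𝔉.2 𝒞 h𝒞).1 hV
  choose f hfD hfB using hpoint
  refine ⟨range f, range_subset_iff.2 hfD, ?_, h𝔉.1, fun 𝒞 h𝒞 =>
    ⟨fun V hV => mem_biUnion (mem_range_self ⟨V, 𝒞, h𝒞, hV⟩) (hfB _), (h𝔉.2 𝒞 h𝒞).2⟩⟩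
  calc #(range f) ≤ #(⋃₀ 𝔉) := mk_range_le
    _ ≤ #𝔉 * ⨆ 𝒞 : 𝔉, #𝒞 := mk_sUnion_le _
    _ ≤ ν * cellularity X := mul_le_mul' h𝔉.1 <| ciSup_le' fun 𝒞 =>
      mk_le_cellularity (fun V hV => hB V ((h𝔉.2 𝒞 𝒞.2).1 hV)) (h𝔉.2 𝒞 𝒞.2).2
    _ = cellularity X * ν := mul_comm _ _

theorem exists_dense_mk_le_piChar_pow [T2Space X] [Nonempty X] :
    ∃ D : Set X, Dense D ∧ #D ≤ piChar X ^ (cellularity X * nq X) := by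
  choose B hB hBcard using exists_isLocalPiBase_mk_le_piChar (X := X)
  set κ := cellularity X * nq X
  set θ := piChar X ^ κ
  have hc : cellularity X ≤ κ := le_mul_right (aleph0_pos.trans_le nq_mem_nqSet.1).ne'
  have hnq : nq X ≤ κ := le_mul_left (aleph0_pos.trans_le aleph0_le_cellularity).ne'
  have hκ : ℵ₀ ≤ κ := aleph0_le_cellularity.trans hc
  have hπθ : piChar X ≤ θ := self_le_power _ (one_le_aleph0.trans hκ)
  have hθ : ℵ₀ ≤ θ := aleph0_le_piChar.trans hπθ
  have hκθ : κ ≤ θ :=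
    (cantor κ).le.trans (power_le_power_right (ofNat_le_aleph0.trans aleph0_le_piChar))
  have hθ_pow : ∀ μ ≤ κ, θ ^ μ ≤ θ := fun μ hμ =>
    (power_le_power_left (aleph0_pos.trans_le hθ).ne' hμ).trans_eq
      (by rw [← power_mul, mul_eq_self hκ])
  -- When `outsideClosures 𝔉` is empty, `epsilon` returns a junk point; it only enlarges `Φ S`.
  let Φ : Set X → Set X := fun S => (fun 𝔉 => Classical.epsilon (· ∈ outsideClosures 𝔉)) ''
    disjointSubfamilies (⋃ x ∈ S, B x) (nq X)
  have hpool : ∀ S : Set X, ∀ V ∈ ⋃ x ∈ S, B x, IsOpen V ∧ V.Nonempty := fun S V hV => by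
    obtain ⟨x, -, hx⟩ := mem_iUnion₂.1 hV
    exact (hB x).1 V hx
  have hpool_card : ∀ S : Set X, #S ≤ κ → #(⋃ x ∈ S, B x) ≤ θ := fun S hS =>
    calc _ ≤ _ := mk_biUnion_le _ _
      _ ≤ θ * θ := mul_le_mul' (hS.trans hκθ) (ciSup_le' fun x => (hBcard x).trans hπθ)
      _ = θ := mul_eq_self hθ
  have hΦ : ∀ S : Set X, #S ≤ κ → #(Φ S) ≤ θ := fun S hS =>
    mk_image_le.trans <| mk_disjointSubfamilies_le (hpool S) hθ (hpool_card S hS)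
      (hθ_pow _ hc) (hθ_pow _ hnq)
  obtain ⟨D, hDcard, hDclosed⟩ := exists_closed_under_small_subsets hκ hθ (hθ_pow κ le_rfl) hΦ
  refine ⟨D, ?_, hDcard⟩
  refine dense_of_forall_inter_outsideClosures_nonempty hB nq_mem_nqSet fun 𝔉 h𝔉 hne => ?_
  obtain ⟨S, hSD, hSκ, h𝔉S⟩ := exists_subset_mem_disjointSubfamilies (hpool D) h𝔉
  exact ⟨_, Classical.epsilon_spec hne, hDclosed S hSD hSκ ⟨𝔉, h𝔉S, rfl⟩⟩

end Topology

/-- If `X` is Hausdorff then `d(X) ≤ πχ(X)^(c(X)·nq(X))`. -/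
theorem stmt_3 (X : Type u) [TopologicalSpace X] [T2Space X] :
    dens X ≤ piChar X ^ (cellularity X * nq X) := by
  rcases isEmpty_or_nonempty X with _ | _
  · exact (dens_le_mk (D := ∅) fun x => isEmptyElim x).trans (by simp)
  obtain ⟨D, hD, hDcard⟩ := exists_dense_mk_le_piChar_pow (X := X)
  exact (dens_le_mk hD).trans hDcard
end

section
/- For any Hausdorff space X, |X| ≤ |RO(X)|^(wψ_c(X)), where RO(X) is the set of regular open subsets of X. -/
open Cardinal Set TopologicalSpace

universe u

/-!
For each point `x` fix a family `𝒱ₓ` of at most `wψ_c(X)` open sets with `⋂_{V ∈ 𝒱ₓ} cl V = {x}`.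
Replacing every `V` by the regular open set `int (cl V)` does not change its closure, so the set
`{int (cl V) : V ∈ 𝒱ₓ}` of at most `wψ_c(X)` regular open sets still determines `x`. Hence `X`
injects into the nonempty subsets of `RO(X)` of size at most `wψ_c(X)`, of which there are at most
`|RO(X)|^(wψ_c(X))`.
-/

open Function

theorem Cardinal.mk_nonempty_bounded_set_le (β : Type u) (c : Cardinal.{u}) :
    #{t : Set β // t.Nonempty ∧ #t ≤ c} ≤ #β ^ c := by
  induction c using Cardinal.inductionOn with | _ K
  have hrange : ∀ t : {t : Set β // t.Nonempty ∧ #t ≤ #K}, ∃ g : K → β, range g = t := by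
    rintro ⟨t, ht, ⟨e⟩⟩
    have : Nonempty t := ht.to_subtype
    refine ⟨Subtype.val ∘ invFun e, ?_⟩
    rw [range_comp, (invFun_surjective e.injective).range_eq, image_univ, Subtype.range_coe]
  choose g hg using hrange
  rw [power_def]
  exact mk_le_of_injective (f := g) fun t t' h => Subtype.ext <| by rw [← hg t, ← hg t', h]

section RegularOpen

variable {X : Type u} [TopologicalSpace X]

theorem IsOpen.closure_interior_closure {V : Set X} (hV : IsOpen V) :
    closure (interior (closure V)) = closure V := by
  simpa only [hV.interior_eq] using closure_interior_idem (s := V)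

def toRegularOpen (V : Set X) : {R : Set X | R = interior (closure R)} :=
  ⟨interior (closure V), interior_closure_idem.symm⟩

theorem biInter_closure_toRegularOpen_image {𝒱 : Set (Set X)} (h𝒱 : ∀ V ∈ 𝒱, IsOpen V) :
    ⋂ R ∈ toRegularOpen '' 𝒱, closure (R : Set X) = ⋂ V ∈ 𝒱, closure V := by
  rw [biInter_image]
  exact iInter₂_congr fun V hV => (h𝒱 V hV).closure_interior_closure

end RegularOpen

section WeakClosedPseudocharacter

variable {X : Type u} [TopologicalSpace X] [T2Space X]

theorem biInter_closure_open_nhds_eq_singleton (x : X) :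
    ⋂ V ∈ {V : Set X | IsOpen V ∧ x ∈ V}, closure V = {x} := by
  refine subset_antisymm (fun y hy => ?_) (singleton_subset_iff.2 <| mem_iInter₂.2
    fun V hV => subset_closure hV.2)
  by_contra hyx
  obtain ⟨U, W, hU, hW, hxU, hyW, hUW⟩ := t2_separation (Ne.symm hyx)
  exact (hUW.closure_left hW).notMem_of_mem_left (mem_iInter₂.1 hy U ⟨hU, hxU⟩) hyW

theorem exists_open_family_card_le_wPsiC (x : X) :
    ∃ 𝒱 : Set (Set X), (∀ V ∈ 𝒱, IsOpen V) ∧ #𝒱 ≤ wPsiC X ∧ ⋂ V ∈ 𝒱, closure V = {x} := by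
  have hne : {κ : Cardinal.{u} | ℵ₀ ≤ κ ∧ ∃ 𝒱 : Set (Set X),
      (∀ V ∈ 𝒱, IsOpen V) ∧ #𝒱 ≤ κ ∧ ⋂ V ∈ 𝒱, closure V = {x}}.Nonempty :=
    ⟨max ℵ₀ #(Set X), le_max_left _ _, _, fun V hV => hV.1,
      (mk_set_le _).trans (le_max_right _ _), biInter_closure_open_nhds_eq_singleton x⟩
  obtain ⟨-, 𝒱, h𝒱open, h𝒱card, h𝒱⟩ := csInf_mem hne
  exact ⟨𝒱, h𝒱open, h𝒱card.trans (le_ciSup bddAbove_of_small x), h𝒱⟩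

end WeakClosedPseudocharacter

/-- For any Hausdorff space `X`, `|X| ≤ |RO(X)|^(wψ_c(X))`. -/
theorem stmt_11 (X : Type u) [TopologicalSpace X] [T2Space X] :
    #X ≤ cardRO X ^ wPsiC X := by
  rcases subsingleton_or_nontrivial X with hX | hX
  · have hRO : cardRO X ≠ 0 := mk_ne_zero_iff.2 ⟨⟨∅, by simp⟩⟩
    exact (le_one_iff_subsingleton.2 hX).trans
      (Cardinal.one_le_iff_ne_zero.2 (power_ne_zero _ hRO))
  choose 𝒱 h𝒱open h𝒱card h𝒱 using exists_open_family_card_le_wPsiC (X := X)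
  have h𝒱ne (x : X) : (𝒱 x).Nonempty := by
    refine nonempty_iff_ne_empty.2 fun hempty => ?_
    obtain ⟨y, hy⟩ := exists_ne x
    exact hy <| (h𝒱 x).subset (by simp [hempty])
  let trace (x : X) :
      {t : Set {R : Set X | R = interior (closure R)} // t.Nonempty ∧ #t ≤ wPsiC X} :=
    ⟨toRegularOpen '' 𝒱 x, (h𝒱ne x).image _, mk_image_le.trans (h𝒱card x)⟩
  have htrace : Injective trace := fun x y hxy => by
    have hx := biInter_closure_toRegularOpen_image (h𝒱open x)
    rw [h𝒱 x, show toRegularOpen '' 𝒱 x = toRegularOpen '' 𝒱 y from congrArg Subtype.val hxy,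
      biInter_closure_toRegularOpen_image (h𝒱open y), h𝒱 y] at hx
    exact singleton_eq_singleton_iff.1 hx.symm
  exact (mk_le_of_injective htrace).trans (mk_nonempty_bounded_set_le _ _)
end
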